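/- arXiv:0905.0036 — 2 statements merged into one kernel-verified Lean document; each statement's English description precedes it below -/
import Mathlib

section
/- Suppose c₁ₑ ≥ 1 and c₂ₑ > c₂₁·c₁ₑ with all gains positive. Then there exist P₁ᵇ > 0 and P₂^{j} > 0 such that γ(P₁ᵇ/(1 + c₂₁P₂^{j})) − γ(c₁ₑP₁ᵇ/(1 + c₂ₑP₂^{j})) > 0. That is, cooperative jamming by user 2 can make a positive secrecy rate achievable for user 1 even when user 1 alone achieves zero secrecy rate. -/
/-
Jamming with power J lowers the receiver's SNR by the factor 1 + c₂₁J and the eavesdropper's by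
1 + c₂ₑJ. Since c₂ₑ > c₂₁c₁ₑ, the eavesdropper's SNR c₁ₑP/(1 + c₂ₑJ) falls below the receiver's
P/(1 + c₂₁J) once J is large enough, and γ is strictly increasing.
-/

noncomputable def gamma (x : ℝ) : ℝ := (1/2) * Real.logb 2 (1 + x)

lemma gamma_strictMonoOn : StrictMonoOn gamma (Set.Ioi (-1)) := by
  intro x hx y _ hxy
  have hx' : 0 < 1 + x := by linarith [Set.mem_Ioi.mp hx]
  unfold gamma
  gcongr
  norm_num

lemma gamma_div_sub_gamma_div_pos {a b e J P : ℝ} (hP : 0 < P) (he : 0 < e)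
    (ha : 0 < 1 + a * J) (hJ : e * (1 + a * J) < 1 + b * J) :
    0 < gamma (P / (1 + a * J)) - gamma (e * P / (1 + b * J)) := by
  have hb : 0 < 1 + b * J := lt_trans (by positivity) hJ
  have hsnr : e * P / (1 + b * J) < P / (1 + a * J) := by
    rw [div_lt_div_iff₀ hb ha]
    nlinarith
  have heve : e * P / (1 + b * J) ∈ Set.Ioi (-1) := by
    rw [Set.mem_Ioi]; linarith [show 0 < e * P / (1 + b * J) by positivity]
  exact sub_pos.mpr (gamma_strictMonoOn heve (lt_trans heve hsnr) hsnr)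

lemma exists_jamming_power {c21 c1e c2e : ℝ} (hc1e : 0 < c1e) (h2 : c21 * c1e < c2e) :
    ∃ J : ℝ, 0 < J ∧ c1e * (1 + c21 * J) < 1 + c2e * J := by
  have hd : 0 < c2e - c21 * c1e := by linarith
  refine ⟨c1e / (c2e - c21 * c1e), div_pos hc1e hd, ?_⟩
  -- the witness makes (c₂ₑ - c₂₁c₁ₑ)J = c₁ₑ, which exceeds c₁ₑ - 1
  have hJ : (c2e - c21 * c1e) * (c1e / (c2e - c21 * c1e)) = c1e := mul_div_cancel₀ _ hd.ne'
  linarith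

theorem stmt_3_general (c21 c1e c2e : ℝ) (hc21 : 0 < c21) (hc1e : 0 < c1e)
    (h2 : c21 * c1e < c2e) :
    ∃ P1b Pj : ℝ, 0 < P1b ∧ 0 < Pj ∧
      0 < gamma (P1b / (1 + c21 * Pj)) - gamma (c1e * P1b / (1 + c2e * Pj)) := by
  obtain ⟨J, hJ, hgain⟩ := exists_jamming_power hc1e h2
  exact ⟨1, J, one_pos, hJ, gamma_div_sub_gamma_div_pos one_pos hc1e (by positivity) hgain⟩

theorem stmt_3 (c21 c1e c2e : ℝ) (hc21 : 0 < c21) (hc1e : 0 < c1e) (hc2e : 0 < c2e)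
    (h1 : 1 ≤ c1e) (h2 : c21 * c1e < c2e) :
    ∃ P1b Pj : ℝ, 0 < P1b ∧ 0 < Pj ∧
      0 < gamma (P1b / (1 + c21 * Pj)) - gamma (c1e * P1b / (1 + c2e * Pj)) :=
  stmt_3_general c21 c1e c2e hc21 hc1e h2
end

section
/- For the Gaussian wiretap channel with noise injection (channel prefixing): for any P > 0, gains c_e ∈ (0,1), the secrecy rate without jamming, γ(Pᵇ) − γ(c_e Pᵇ) with Pᵇ = P, is at least the rate obtained by splitting power into Pᵇ + Pʲ = P and self-jamming: γ(Pᵇ/(1+Pʲ)) − γ(c_e Pᵇ/(1+c_e Pʲ)) for all Pʲ ∈ [0,P]. That is, when c_e < 1, self channel prefixing (self-jamming) does not increase the single-user Gaussian secrecy rate. -/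
lemma gamma_le_gamma {x y : ℝ} (hx : -1 < x) (hxy : x ≤ y) : gamma x ≤ gamma y := by
  unfold gamma
  gcongr
  · norm_num
  · linarith

lemma gamma_mul_le {c x : ℝ} (hc0 : 0 ≤ c) (hc1 : c ≤ 1) (hx : 0 ≤ x) :
    gamma (c * x) ≤ gamma x :=
  gamma_le_gamma (by nlinarith) (mul_le_of_le_one_left hx hc1)

lemma gamma_div_one_add {s n : ℝ} (hn : 0 ≤ n) (hs : 0 ≤ s) :
    gamma (s / (1 + n)) = gamma (s + n) - gamma n := by
  have hn' : 1 + n ≠ 0 := by positivity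
  have hsn : 1 + (s + n) ≠ 0 := by positivity
  have hsplit : 1 + s / (1 + n) = (1 + (s + n)) / (1 + n) := by
    field_simp
    ring
  rw [gamma, hsplit, Real.logb_div hsn hn', gamma, gamma]
  ring

theorem stmt_11_general (P ce : ℝ) (hce0 : 0 < ce) (hce1 : ce < 1) :
    ∀ Pb Pj : ℝ, 0 ≤ Pb → 0 ≤ Pj → Pb + Pj = P →
      gamma (Pb / (1 + Pj)) - gamma (ce * Pb / (1 + ce * Pj)) ≤
        gamma P - gamma (ce * P) := by
  intro Pb Pj hPb hPj hsum
  subst hsum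
  rw [gamma_div_one_add hPj hPb, gamma_div_one_add (by positivity) (by positivity), ← mul_add]
  have hjam := gamma_mul_le hce0.le hce1.le hPj
  linarith

theorem stmt_11 (P ce : ℝ) (hP : 0 < P) (hce0 : 0 < ce) (hce1 : ce < 1) :
    ∀ Pb Pj : ℝ, 0 ≤ Pb → 0 ≤ Pj → Pb + Pj = P →
      gamma (Pb / (1 + Pj)) - gamma (ce * Pb / (1 + ce * Pj)) ≤
        gamma P - gamma (ce * P) :=
  stmt_11_general P ce hce0 hce1
end
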